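/- Stringy grading of sl(n|n+1): let n ≥ 1 and work in Matrix (Fin (2n+1)) (Fin (2n+1)) ℚ. Let e₀ be the diagonal matrix with entries (e₀)_{kk} = n − 1 − 2k for 0 ≤ k ≤ n−1 and (e₀)_{kk} = 3n − 2k for n ≤ k ≤ 2n, let u₀ be the diagonal matrix with entries −(n+1) for 0 ≤ k ≤ n−1 and −n for n ≤ k ≤ 2n, and let D = (1/2)·e₀ + n·u₀, with diagonal entries d(k). Then for all k, l: ⁅D, E k l⁆ = (d(k) − d(l))·(E k l), and d(k) − d(l) > 0 if and only if (k < l and l ≤ n−1) or (n ≤ k and k < l) or (n ≤ k and l ≤ n−1). Hence the strictly positively graded part of sl(n|n+1) for this grading is spanned by the E k l with either both indices bosonic and k < l, or both fermionic and k < l, or k fermionic and l bosonic. -/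

import Mathlib

/-!
Both `e₀` and `u₀` are diagonal, hence so is `D`, and `ad D` acts on the matrix unit `E k l` by
`d k - d l`. Explicitly `d k = (n - 1)/2 - n² - n - k + (2n + 1/2)·[n ≤ k]`: the grade drops by one
at each step inside a block, and the jump `2n + 1/2` at the fermionic block exceeds the whole
index range, so every fermionic grade lies above every bosonic one.
-/

namespace Matrix

variable {m α : Type*} [Fintype m] [DecidableEq m]

theorem diagonal_mul_single [NonUnitalNonAssocSemiring α] (f : m → α) (i j : m) (c : α) :
    diagonal f * single i j c = single i j (f i * c) := by
  ext a b
  rw [diagonal_mul, single_apply, single_apply]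
  split_ifs with h
  · rw [h.1]
  · exact mul_zero _

theorem single_mul_diagonal [NonUnitalNonAssocSemiring α] (f : m → α) (i j : m) (c : α) :
    single i j c * diagonal f = single i j (c * f j) := by
  ext a b
  rw [mul_diagonal, single_apply, single_apply]
  split_ifs with h
  · rw [h.2]
  · exact zero_mul _

theorem lie_diagonal_single [CommRing α] (f : m → α) (i j : m) (c : α) :
    ⁅diagonal f, single i j c⁆ = (f i - f j) • single i j c := by
  rw [Ring.lie_def, diagonal_mul_single, single_mul_diagonal, sub_smul, smul_single,
    smul_single, smul_eq_mul, smul_eq_mul, mul_comm c]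

end Matrix

def blockGrade (n : ℕ) (s : ℚ) (k : ℕ) : ℚ := (if n ≤ k then s else 0) - k

theorem blockGrade_sub_pos_iff (n : ℕ) {s : ℚ} {k l : ℕ} (hk : (k : ℚ) < s)
    (hl : (l : ℚ) < s) :
    0 < blockGrade n s k - blockGrade n s l ↔
      (k < l ∧ l < n) ∨ (n ≤ k ∧ k < l) ∨ (n ≤ k ∧ l < n) := by
  have hk0 : (0 : ℚ) ≤ k := k.cast_nonneg
  have hl0 : (0 : ℚ) ≤ l := l.cast_nonneg
  unfold blockGrade
  split_ifs with hnk hnl hnl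
  · rw [sub_sub_sub_cancel_left, sub_pos, Nat.cast_lt]; omega
  · exact iff_of_true (by linarith) (by omega)
  · exact iff_of_false (by linarith) (by omega)
  · rw [sub_sub_sub_cancel_left, sub_pos, Nat.cast_lt]; omega

/-- Stringy grading of sl(n|n+1): with e₀, u₀ the Cartan generators of the principal
sl(2|1) subalgebra in the fundamental representation (indices 0..n−1 bosonic,
n..2n fermionic) and D = (1/2)·e₀ + n·u₀ with diagonal d, ad D grades the matrix
units by d(k) − d(l), and the grade is strictly positive iff (k < l and l ≤ n−1) or
(n ≤ k and k < l) or (n ≤ k and l ≤ n−1).  Hence the strictly positively graded part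
of sl(n|n+1) is spanned by the E k l with both indices bosonic and k < l, both
fermionic and k < l, or k fermionic and l bosonic. -/
theorem stringy_grading_sl_n_np1 (n : ℕ) (hn : 1 ≤ n)
    (e0 u0 D : Matrix (Fin (2 * n + 1)) (Fin (2 * n + 1)) ℚ)
    (he0 : e0 = Matrix.diagonal fun k : Fin (2 * n + 1) =>
      if (k : ℕ) ≤ n - 1 then (n : ℚ) - 1 - 2 * (k : ℕ) else 3 * (n : ℚ) - 2 * (k : ℕ))
    (hu0 : u0 = Matrix.diagonal fun k : Fin (2 * n + 1) =>
      if (k : ℕ) ≤ n - 1 then -((n : ℚ) + 1) else -(n : ℚ))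
    (hD : D = ((1 : ℚ)/2) • e0 + (n : ℚ) • u0)
    (d : Fin (2 * n + 1) → ℚ) (hd : ∀ k, d k = D k k) :
    (∀ k l : Fin (2 * n + 1),
      ⁅D, Matrix.single k l (1 : ℚ)⁆ = (d k - d l) • Matrix.single k l 1) ∧
    (∀ k l : Fin (2 * n + 1), 0 < d k - d l ↔
      ((k < l ∧ (l : ℕ) ≤ n - 1) ∨ (n ≤ (k : ℕ) ∧ k < l) ∨
        (n ≤ (k : ℕ) ∧ (l : ℕ) ≤ n - 1))) := by
  obtain ⟨g, hg⟩ : ∃ g, D = Matrix.diagonal g :=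
    ⟨_, by rw [hD, he0, hu0, ← Matrix.diagonal_smul, ← Matrix.diagonal_smul,
      Matrix.diagonal_add]⟩
  have hD_diag : D = Matrix.diagonal d := by
    rw [hg]; congr; funext k; rw [hd, hg, Matrix.diagonal_apply_eq]
  have hd_eq (k : Fin (2 * n + 1)) :
      d k = ((n : ℚ) - 1) / 2 - n ^ 2 - n + blockGrade n (2 * n + 1 / 2) k := by
    rw [hd, hD, he0, hu0, Matrix.add_apply, Matrix.smul_apply, Matrix.smul_apply,
      Matrix.diagonal_apply_eq, Matrix.diagonal_apply_eq, blockGrade]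
    split_ifs <;> first | omega | ring
  have hk_lt (k : Fin (2 * n + 1)) : ((k : ℕ) : ℚ) < 2 * n + 1 / 2 := by
    have : ((k : ℕ) : ℚ) ≤ 2 * n := by exact_mod_cast Nat.lt_succ_iff.mp k.isLt
    linarith
  refine ⟨fun k l => by rw [hD_diag, Matrix.lie_diagonal_single], fun k l => ?_⟩
  rw [hd_eq, hd_eq, add_sub_add_left_eq_sub, blockGrade_sub_pos_iff n (hk_lt k) (hk_lt l),
    Fin.lt_def]
  -- With truncated subtraction, `l ≤ n - 1 ↔ l < n` holds only for `1 ≤ n`.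
  omega
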